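/- Let x₀ ∈ ℝⁿ, X₀ = x₀x₀ᵀ, and let Λ be a real symmetric n×n matrix. Suppose: (a) vᵀΛv ≥ 0 for every v ∈ ℝⁿ with vᵀx₀ = 0; and (b) for every q ∈ ℝⁿ with qᵀx₀ = 0 and ⟨Λ, qqᵀ⟩ = 0, one has ⟨Λ, x₀qᵀ + qx₀ᵀ⟩ = 0. Then there exists δ > 0 such that X₀ + δΛ is positive semidefinite. -/

import Mathlib

/-!
Write `c • x = β • x₀ + q` with `c = x₀ ⬝ᵥ x₀`, `β = x₀ ⬝ᵥ x` and `q ⊥ x₀`. Then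
`c² xᵀ(X₀ + δΛ)x = c²β² + δ (β² x₀ᵀΛx₀ + 2β x₀ᵀΛq + qᵀΛq)`.
By (a) the form `qᵀΛq` is positive semidefinite on `x₀ᗮ`, and by (b) the functional
`q ↦ x₀ᵀΛq` vanishes on its null vectors; in finite dimension this forces
`(x₀ᵀΛq)² ≤ K qᵀΛq` for some `K > 0`, which absorbs the cross term once `δ` is small.
-/

open Matrix

/-- The functional vanishes on the kernel of `B`, hence factors as `φ = B · u`; then
Cauchy–Schwarz gives `φ v ^ 2 ≤ B u u * B v v`. -/
theorem LinearMap.BilinForm.exists_sq_le_mul_apply_self {𝕜 V : Type*} [Field 𝕜] [LinearOrder 𝕜]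
    [IsStrictOrderedRing 𝕜] [AddCommGroup V] [Module 𝕜 V] [FiniteDimensional 𝕜 V]
    (B : LinearMap.BilinForm 𝕜 V) (hs : ∀ v, 0 ≤ B v v) (hB : LinearMap.IsSymm B)
    (φ : Module.Dual 𝕜 V) (hφ : ∀ v, B v v = 0 → φ v = 0) :
    ∃ C, 0 < C ∧ ∀ v, φ v ^ 2 ≤ C * B v v := by
  have hφker : φ ∈ (LinearMap.ker B).dualAnnihilator :=
    (Submodule.mem_dualAnnihilator φ).2 fun v hv =>
      hφ v ((B.apply_apply_same_eq_zero_iff hs hB).2 hv)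
  rw [← LinearMap.range_dualMap_eq_dualAnnihilator_ker] at hφker
  obtain ⟨ψ, rfl⟩ := hφker
  obtain ⟨u, rfl⟩ := (Module.evalEquiv 𝕜 V).surjective ψ
  refine ⟨B u u + 1, by linarith [hs u], fun v => ?_⟩
  calc B.dualMap (Module.evalEquiv 𝕜 V u) v ^ 2 = B v u ^ 2 := rfl
    _ ≤ B v v * B u u := B.apply_sq_le_of_symm hs hB v u
    _ ≤ (B u u + 1) * B v v := by nlinarith [hs v]

theorem mul_sq_add_mul_quadratic_nonneg {R : Type*} [CommRing R] [LinearOrder R]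
    [IsStrictOrderedRing R] {K a b ℓ s β δ : R} (hK : 0 < K) (hℓ : ℓ ^ 2 ≤ K * s)
    (hδ : 0 ≤ δ) (hδK : δ * (K - b) ≤ a) :
    0 ≤ a * β ^ 2 + δ * (b * β ^ 2 + 2 * β * ℓ + s) := by
  refine nonneg_of_mul_nonneg_right ?_ hK
  have hsplit : K * (a * β ^ 2 + δ * (b * β ^ 2 + 2 * β * ℓ + s)) =
      K * β ^ 2 * (a - δ * (K - b)) + δ * (K * β + ℓ) ^ 2 + δ * (K * s - ℓ ^ 2) := by ring
  have ha := sub_nonneg.2 hδK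
  have hs := sub_nonneg.2 hℓ
  rw [hsplit]
  positivity

namespace Matrix

variable {ι : Type*} [Fintype ι]

theorem IsSymm.dotProduct_mulVec_comm {R : Type*} [CommSemiring R] {A : Matrix ι ι R}
    (hA : A.IsSymm) (v w : ι → R) : v ⬝ᵥ A *ᵥ w = w ⬝ᵥ A *ᵥ v := by
  rw [dotProduct_mulVec, ← mulVec_transpose, hA.eq, dotProduct_comm]

theorem IsSymm.dotProduct_mulVec_add_self {R : Type*} [CommRing R] {A : Matrix ι ι R}
    (hA : A.IsSymm) (v w : ι → R) :
    (v + w) ⬝ᵥ A *ᵥ (v + w) = v ⬝ᵥ A *ᵥ v + 2 * (v ⬝ᵥ A *ᵥ w) + w ⬝ᵥ A *ᵥ w := by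
  simp only [mulVec_add, dotProduct_add, add_dotProduct, hA.dotProduct_mulVec_comm w v]
  ring

theorem trace_mul_vecMulVec {R : Type*} [CommSemiring R] (A : Matrix ι ι R) (v w : ι → R) :
    (A * vecMulVec v w).trace = w ⬝ᵥ A *ᵥ v := by
  rw [mul_vecMulVec, trace_vecMulVec, dotProduct_comm]

theorem IsSymm.posSemidef {A : Matrix ι ι ℝ} (hA : A.IsSymm) (h : ∀ v, 0 ≤ v ⬝ᵥ A *ᵥ v) :
    A.PosSemidef :=
  posSemidef_iff_dotProduct_mulVec.2 ⟨by simpa [IsHermitian] using hA.eq, by simpa using h⟩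

theorem exists_sq_dotProduct_mulVec_le {𝕜 : Type*} [Field 𝕜] [LinearOrder 𝕜]
    [IsStrictOrderedRing 𝕜] {A : Matrix ι ι 𝕜} (hA : A.IsSymm) (W : Submodule 𝕜 (ι → 𝕜))
    (y : ι → 𝕜) (hW : ∀ v ∈ W, 0 ≤ v ⬝ᵥ A *ᵥ v)
    (hy : ∀ v ∈ W, v ⬝ᵥ A *ᵥ v = 0 → y ⬝ᵥ A *ᵥ v = 0) :
    ∃ C, 0 < C ∧ ∀ v ∈ W, (y ⬝ᵥ A *ᵥ v) ^ 2 ≤ C * (v ⬝ᵥ A *ᵥ v) := by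
  classical
  let B := (toLinearMap₂' 𝕜 A).compl₁₂ W.subtype W.subtype
  have hBapply (v w : W) : B v w = (v : ι → 𝕜) ⬝ᵥ A *ᵥ w := by
    simp [B, toLinearMap₂'_apply']
  have hB : LinearMap.IsSymm B :=
    ⟨fun v w => by simpa [hBapply] using hA.dotProduct_mulVec_comm v w⟩
  obtain ⟨C, hC, hφ⟩ := LinearMap.BilinForm.exists_sq_le_mul_apply_self B
    (fun v => hBapply v v ▸ hW v v.2) hB ((toLinearMap₂' 𝕜 A y).comp W.subtype)
    (fun v hv => by simpa [toLinearMap₂'_apply'] using hy v v.2 (hBapply v v ▸ hv))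
  exact ⟨C, hC, fun v hv => by simpa [hBapply, toLinearMap₂'_apply'] using hφ ⟨v, hv⟩⟩

theorem posSemidef_vecMulVec_self_add_smul {A : Matrix ι ι ℝ} (hA : A.IsSymm) {x₀ : ι → ℝ}
    (hx₀ : x₀ ≠ 0) {K δ : ℝ} (hK : 0 < K)
    (hℓ : ∀ q, q ⬝ᵥ x₀ = 0 → (x₀ ⬝ᵥ A *ᵥ q) ^ 2 ≤ K * (q ⬝ᵥ A *ᵥ q)) (hδ : 0 ≤ δ)
    (hδK : δ * (K - x₀ ⬝ᵥ A *ᵥ x₀) ≤ (x₀ ⬝ᵥ x₀) ^ 2) :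
    (vecMulVec x₀ x₀ + δ • A).PosSemidef := by
  refine (IsSymm.add (transpose_vecMulVec x₀ x₀) (hA.smul δ)).posSemidef fun x => ?_
  set c := x₀ ⬝ᵥ x₀
  set β := x₀ ⬝ᵥ x
  set q := c • x - β • x₀
  have hq : q ⬝ᵥ x₀ = 0 := by
    rw [sub_dotProduct, smul_dotProduct, smul_dotProduct, dotProduct_comm x, smul_eq_mul,
      smul_eq_mul, mul_comm]
    exact sub_self _
  have hcx : c • x = β • x₀ + q := by simp [q]
  have hx₀x : x ⬝ᵥ vecMulVec x₀ x₀ *ᵥ x = β ^ 2 := by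
    simp only [vecMulVec_mulVec, op_smul_eq_smul, dotProduct_smul, smul_eq_mul, β,
      dotProduct_comm x x₀, sq]
  have hAx : c ^ 2 * (x ⬝ᵥ A *ᵥ x) =
      (x₀ ⬝ᵥ A *ᵥ x₀) * β ^ 2 + 2 * β * (x₀ ⬝ᵥ A *ᵥ q) + q ⬝ᵥ A *ᵥ q := by
    have := hA.dotProduct_mulVec_add_self (β • x₀) q
    simp only [← hcx, mulVec_smul, dotProduct_smul, smul_dotProduct, smul_eq_mul] at this
    linear_combination this
  have hc : 0 < c := by simpa using dotProduct_self_star_pos_iff.2 hx₀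
  refine nonneg_of_mul_nonneg_right ?_ (pow_pos hc 2)
  rw [add_mulVec, dotProduct_add, smul_mulVec, dotProduct_smul, smul_eq_mul, hx₀x, mul_add,
    mul_left_comm, hAx]
  exact mul_sq_add_mul_quadratic_nonneg hK (hℓ q hq) hδ hδK

end Matrix

/-- **Lemma 4, sufficiency direction.** If (a) the compression of `Λ` to `{x₀}ᗮ` is
positive semidefinite and (b) any `q ⊥ x₀` with `⟨Λ, qqᵀ⟩ = 0` satisfies
`⟨Λ, x₀qᵀ + qx₀ᵀ⟩ = 0`, then `x₀x₀ᵀ + δΛ ⪰ 0` for some `δ > 0`. -/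
theorem psd_perturbation_sufficient {n : ℕ}
    (x₀ : Fin n → ℝ) (X₀ Λ : Matrix (Fin n) (Fin n) ℝ)
    (hX₀ : X₀ = vecMulVec x₀ x₀)
    (hΛ : Λ.IsSymm)
    (ha : ∀ v : Fin n → ℝ, v ⬝ᵥ x₀ = 0 → 0 ≤ v ⬝ᵥ Λ.mulVec v)
    (hb : ∀ q : Fin n → ℝ, q ⬝ᵥ x₀ = 0 → (Λ * vecMulVec q q).trace = 0 →
      (Λ * (vecMulVec x₀ q + vecMulVec q x₀)).trace = 0) :
    ∃ δ : ℝ, 0 < δ ∧ (X₀ + δ • Λ).PosSemidef := by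
  subst hX₀
  rcases eq_or_ne x₀ 0 with rfl | hx₀
  · exact ⟨1, one_pos, by simpa using hΛ.posSemidef fun v => ha v (dotProduct_zero v)⟩
  have hb' : ∀ q, q ⬝ᵥ x₀ = 0 → q ⬝ᵥ Λ *ᵥ q = 0 → x₀ ⬝ᵥ Λ *ᵥ q = 0 := fun q hq hqq => by
    have := hb q hq (by rwa [trace_mul_vecMulVec])
    rw [mul_add, trace_add, trace_mul_vecMulVec, trace_mul_vecMulVec,
      hΛ.dotProduct_mulVec_comm q x₀] at this
    linarith
  obtain ⟨K, hK, hℓ⟩ :=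
    exists_sq_dotProduct_mulVec_le hΛ (LinearMap.ker ((dotProductBilin ℝ ℝ).flip x₀)) x₀ ha hb'
  set Λ₀ := x₀ ⬝ᵥ Λ *ᵥ x₀
  have hc : 0 < x₀ ⬝ᵥ x₀ := by simpa using dotProduct_self_star_pos_iff.2 hx₀
  have hKΛ₀ : 0 < K + |Λ₀| := by positivity
  refine ⟨(x₀ ⬝ᵥ x₀) ^ 2 / (K + |Λ₀|), by positivity,
    posSemidef_vecMulVec_self_add_smul hΛ hx₀ hK hℓ (by positivity) ?_⟩
  rw [div_mul_eq_mul_div, div_le_iff₀ hKΛ₀]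
  exact mul_le_mul_of_nonneg_left (by linarith [neg_abs_le Λ₀]) (sq_nonneg _)
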